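/- Let φ be a non-zero Bernstein function and let 0 < c ≤ d. Then for all a, a' ∈ [c, d] and all b ∈ ℝ, |φ(a' + ib)| ≤ (d/c) · |φ(a + ib)|. More precisely, |φ(a'+ib) - φ(a+ib)| ≤ |a - a'| · φ'(min(a,a')) and |φ(a+ib)| ≥ φ(a), and φ'(x)/φ(x) ≤ 1/x yields the stated bound. -/

import Mathlib

/-!
Write `φ(z) = c₀ + d₀ z + ∫ (1 - e^{-zy}) μ(dy)` and `m = min a a'`. On the half-plane
`Re w ≥ m` the map `w ↦ e^{-wy}` is `y e^{-my}`-Lipschitz, so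
`|φ(a' + ib) - φ(a + ib)| ≤ |a - a'| φ'(m)` with `φ'(m) = d₀ + ∫ y e^{-my} μ(dy)`.
Since `Re e^{-zy} ≤ |e^{-zy}| = e^{-y Re z}`, `|φ(z)| ≥ Re φ(z) ≥ φ(Re z)`, and
`t e^{-t} ≤ 1 - e^{-t}` gives `m φ'(m) ≤ φ(m) ≤ φ(a)`. Together,
`|φ(a' + ib)| ≤ |φ(a + ib)| + (d - c) φ'(m) ≤ (d / c) |φ(a + ib)|`.
-/

open MeasureTheory Set
open scoped Real Complex

theorem norm_cexp_neg_sub_cexp_neg_le {m : ℝ} {z w : ℂ} (hz : m ≤ z.re) (hw : m ≤ w.re) :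
    ‖cexp (-z) - cexp (-w)‖ ≤ rexp (-m) * ‖z - w‖ := by
  refine (convex_halfSpace_re_ge m).norm_image_sub_le_of_norm_hasDerivWithin_le
    (f := fun u => cexp (-u)) (f' := fun u => -cexp (-u))
    (fun u _ => ?_) (fun u hu => ?_) hw hz
  · simpa using ((hasDerivAt_neg u).cexp).hasDerivWithinAt
  · rw [norm_neg, Complex.norm_exp, Complex.neg_re]
    exact Real.exp_le_exp.2 (neg_le_neg hu)

theorem norm_one_sub_cexp_neg_le {w : ℂ} (hw : 0 ≤ w.re) :
    ‖1 - cexp (-w)‖ ≤ 2 * min ‖w‖ 1 := by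
  have hlip : ‖1 - cexp (-w)‖ ≤ ‖w‖ := by
    simpa using norm_cexp_neg_sub_cexp_neg_le (z := 0) (le_refl (0 : ℂ).re) hw
  have hbdd : ‖1 - cexp (-w)‖ ≤ 2 := by
    have : ‖cexp (-w)‖ ≤ 1 := by simpa [Complex.norm_exp] using hw
    linarith [norm_sub_le (1 : ℂ) (cexp (-w)), norm_one (α := ℂ)]
  rcases le_total ‖w‖ 1 with h | h
  · rw [min_eq_left h]; linarith [norm_nonneg (1 - cexp (-w))]
  · rw [min_eq_right h]; linarith

theorem min_mul_le_max_mul_min {k y : ℝ} (hy : 0 ≤ y) :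
    min (k * y) 1 ≤ max k 1 * min y 1 := by
  rcases le_total y 1 with h | h
  · rw [min_eq_left h]
    exact (min_le_left _ _).trans (mul_le_mul_of_nonneg_right (le_max_left _ _) hy)
  · rw [min_eq_right h, mul_one]
    exact (min_le_right _ _).trans (le_max_right _ _)

theorem mul_exp_neg_le_one_sub_exp_neg (t : ℝ) : t * rexp (-t) ≤ 1 - rexp (-t) := by
  have h := mul_le_mul_of_nonneg_right (Real.add_one_le_exp t) (Real.exp_pos (-t)).le
  rw [← Real.exp_add, add_neg_cancel, Real.exp_zero] at h
  linarith

theorem mul_exp_neg_le_min {t : ℝ} (ht : 0 ≤ t) : t * rexp (-t) ≤ min t 1 := by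
  refine le_min ?_ ((mul_exp_neg_le_one_sub_exp_neg t).trans ?_)
  · exact mul_le_of_le_one_right ht (Real.exp_le_one_iff.2 (neg_nonpos.2 ht))
  · linarith [Real.exp_pos (-t)]

section LevyIntegral

variable {μ : Measure ℝ}

theorem integrableOn_min_one_of_lintegral_ne_top
    (hμ : ∫⁻ y in Ioi (0 : ℝ), ENNReal.ofReal (min y 1) ∂μ ≠ ⊤) :
    IntegrableOn (fun y : ℝ => min y 1) (Ioi 0) μ :=
  (lintegral_ofReal_ne_top_iff_integrable
    (continuous_id.min continuous_const).aestronglyMeasurable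
    (ae_restrict_of_forall_mem measurableSet_Ioi fun _ hy =>
      le_min (le_of_lt hy) zero_le_one)).1 hμ

theorem integrableOn_one_sub_cexp_neg_mul (hμ : IntegrableOn (fun y : ℝ => min y 1) (Ioi 0) μ)
    {z : ℂ} (hz : 0 ≤ z.re) :
    IntegrableOn (fun y : ℝ => 1 - cexp (-(z * y))) (Ioi 0) μ := by
  refine ((hμ.const_mul (2 * max ‖z‖ 1)).mono' (by fun_prop)
    (ae_restrict_of_forall_mem measurableSet_Ioi fun y hy => ?_))
  have hy : (0 : ℝ) ≤ y := le_of_lt hy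
  calc ‖1 - cexp (-(z * y))‖ ≤ 2 * min (‖z‖ * y) 1 := by
        simpa [abs_of_nonneg hy] using
          norm_one_sub_cexp_neg_le (w := z * y) (by simpa using mul_nonneg hz hy)
    _ ≤ 2 * max ‖z‖ 1 * min y 1 := by
        rw [mul_assoc]; gcongr; exact min_mul_le_max_mul_min hy

theorem integrableOn_exp_neg_mul_mul (hμ : IntegrableOn (fun y : ℝ => min y 1) (Ioi 0) μ)
    {m : ℝ} (hm : 0 < m) :
    IntegrableOn (fun y : ℝ => rexp (-(m * y)) * y) (Ioi 0) μ := by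
  refine ((hμ.const_mul (m⁻¹ * max m 1)).mono' (by fun_prop)
    (ae_restrict_of_forall_mem measurableSet_Ioi fun y hy => ?_))
  have hy : (0 : ℝ) ≤ y := le_of_lt hy
  rw [Real.norm_of_nonneg (by positivity), mul_assoc]
  calc rexp (-(m * y)) * y = m⁻¹ * ((m * y) * rexp (-(m * y))) := by field_simp
    _ ≤ m⁻¹ * (max m 1 * min y 1) := mul_le_mul_of_nonneg_left
        ((mul_exp_neg_le_min (by positivity)).trans (min_mul_le_max_mul_min hy)) (by positivity)

noncomputable def levyIntegral (μ : Measure ℝ) (z : ℂ) : ℂ :=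
  ∫ y in Ioi (0 : ℝ), (1 - cexp (-(z * y))) ∂μ

theorem levyIntegral_ofReal (x : ℝ) :
    levyIntegral μ x = ↑(∫ y in Ioi (0 : ℝ), (1 - rexp (-(x * y))) ∂μ) := by
  rw [levyIntegral, ← integral_complex_ofReal]
  push_cast
  rfl

theorem integrableOn_one_sub_exp_neg_mul (hμ : IntegrableOn (fun y : ℝ => min y 1) (Ioi 0) μ)
    {x : ℝ} (hx : 0 ≤ x) :
    IntegrableOn (fun y : ℝ => 1 - rexp (-(x * y))) (Ioi 0) μ := by
  have := (integrableOn_one_sub_cexp_neg_mul hμ (z := x) (by simpa using hx)).re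
  refine this.congr (ae_of_all _ fun y => ?_)
  simp [← Complex.ofReal_mul, ← Complex.ofReal_neg, ← Complex.ofReal_exp]

theorem re_levyIntegral_re_le (hμ : IntegrableOn (fun y : ℝ => min y 1) (Ioi 0) μ)
    {z : ℂ} (hz : 0 ≤ z.re) :
    (levyIntegral μ z.re).re ≤ (levyIntegral μ z).re := by
  have hre := integral_re (integrableOn_one_sub_cexp_neg_mul hμ hz)
  simp only [RCLike.re_to_complex] at hre
  rw [levyIntegral_ofReal, Complex.ofReal_re, levyIntegral, ← hre]
  refine integral_mono (integrableOn_one_sub_exp_neg_mul hμ hz)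
    (integrableOn_one_sub_cexp_neg_mul hμ hz).re fun y => ?_
  have : (cexp (-(z * y))).re ≤ rexp (-(z.re * y)) := by
    simpa [Complex.norm_exp] using Complex.re_le_norm (cexp (-(z * y)))
  simp only [Complex.sub_re, Complex.one_re]
  linarith

theorem monotoneOn_re_levyIntegral (hμ : IntegrableOn (fun y : ℝ => min y 1) (Ioi 0) μ) :
    MonotoneOn (fun x : ℝ => (levyIntegral μ x).re) (Ici 0) := by
  intro x hx x' hx' hxx'
  simp only [levyIntegral_ofReal, Complex.ofReal_re]
  refine setIntegral_mono_on (integrableOn_one_sub_exp_neg_mul hμ hx)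
    (integrableOn_one_sub_exp_neg_mul hμ hx') measurableSet_Ioi fun y hy => ?_
  have : rexp (-(x' * y)) ≤ rexp (-(x * y)) :=
    Real.exp_le_exp.2 (neg_le_neg (mul_le_mul_of_nonneg_right hxx' (le_of_lt hy)))
  linarith

theorem mul_integral_le_re_levyIntegral (hμ : IntegrableOn (fun y : ℝ => min y 1) (Ioi 0) μ)
    {x : ℝ} (hx : 0 < x) :
    x * ∫ y in Ioi (0 : ℝ), rexp (-(x * y)) * y ∂μ ≤ (levyIntegral μ x).re := by
  rw [levyIntegral_ofReal, Complex.ofReal_re, ← integral_const_mul]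
  refine setIntegral_mono_on ((integrableOn_exp_neg_mul_mul hμ hx).const_mul x)
    (integrableOn_one_sub_exp_neg_mul hμ hx.le) measurableSet_Ioi fun y _ => ?_
  simpa only [mul_left_comm x, mul_comm _ y, ← mul_assoc] using
    mul_exp_neg_le_one_sub_exp_neg (x * y)

theorem norm_levyIntegral_sub_le (hμ : IntegrableOn (fun y : ℝ => min y 1) (Ioi 0) μ)
    {m : ℝ} (hm : 0 < m) {z w : ℂ} (hz : m ≤ z.re) (hw : m ≤ w.re) :
    ‖levyIntegral μ z - levyIntegral μ w‖ ≤
      ‖z - w‖ * ∫ y in Ioi (0 : ℝ), rexp (-(m * y)) * y ∂μ := by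
  rw [levyIntegral, levyIntegral, ← integral_sub
    (integrableOn_one_sub_cexp_neg_mul hμ (hm.le.trans hz))
    (integrableOn_one_sub_cexp_neg_mul hμ (hm.le.trans hw)), ← integral_const_mul]
  refine norm_integral_le_of_norm_le ((integrableOn_exp_neg_mul_mul hμ hm).const_mul _)
    (ae_restrict_of_forall_mem measurableSet_Ioi fun y hy => ?_)
  have hy : (0 : ℝ) ≤ y := le_of_lt hy
  rw [sub_sub_sub_cancel_left, norm_sub_rev]
  calc ‖cexp (-(z * y)) - cexp (-(w * y))‖ ≤ rexp (-(m * y)) * ‖z * y - w * y‖ :=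
        norm_cexp_neg_sub_cexp_neg_le (by simpa using mul_le_mul_of_nonneg_right hz hy)
          (by simpa using mul_le_mul_of_nonneg_right hw hy)
    _ = ‖z - w‖ * (rexp (-(m * y)) * y) := by
        rw [← sub_mul, norm_mul, Complex.norm_real, Real.norm_of_nonneg hy]; ring

end LevyIntegral

section Bernstein

variable {c₀ d₀ : ℝ} {μ : Measure ℝ} {φ : ℂ → ℂ}

theorem bernstein_norm_sub_le (hd₀ : 0 ≤ d₀)
    (hμ : IntegrableOn (fun y : ℝ => min y 1) (Ioi 0) μ)
    (hφ : ∀ z : ℂ, 0 < z.re → φ z = c₀ + d₀ * z + levyIntegral μ z)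
    {m : ℝ} (hm : 0 < m) {z w : ℂ} (hz : m ≤ z.re) (hw : m ≤ w.re) :
    ‖φ z - φ w‖ ≤
      ‖z - w‖ * (d₀ + ∫ y in Ioi (0 : ℝ), rexp (-(m * y)) * y ∂μ) := by
  rw [hφ z (hm.trans_le hz), hφ w (hm.trans_le hw)]
  calc ‖c₀ + d₀ * z + levyIntegral μ z - (c₀ + d₀ * w + levyIntegral μ w)‖
      = ‖d₀ * (z - w) + (levyIntegral μ z - levyIntegral μ w)‖ := by ring_nf
    _ ≤ d₀ * ‖z - w‖ + ‖z - w‖ * ∫ y in Ioi (0 : ℝ), rexp (-(m * y)) * y ∂μ := by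
        refine (norm_add_le _ _).trans (add_le_add ?_ (norm_levyIntegral_sub_le hμ hm hz hw))
        rw [norm_mul, Complex.norm_real, Real.norm_of_nonneg hd₀]
    _ = ‖z - w‖ * (d₀ + ∫ y in Ioi (0 : ℝ), rexp (-(m * y)) * y ∂μ) := by ring

theorem bernstein_re_re_le_norm (hμ : IntegrableOn (fun y : ℝ => min y 1) (Ioi 0) μ)
    (hφ : ∀ z : ℂ, 0 < z.re → φ z = c₀ + d₀ * z + levyIntegral μ z)
    {z : ℂ} (hz : 0 < z.re) :
    (φ z.re).re ≤ ‖φ z‖ := by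
  refine le_trans ?_ (Complex.re_le_norm (φ z))
  rw [hφ z hz, hφ z.re (by simpa using hz)]
  simpa using re_levyIntegral_re_le hμ hz.le

theorem bernstein_mul_deriv_le_re (hc₀ : 0 ≤ c₀) (hd₀ : 0 ≤ d₀)
    (hμ : IntegrableOn (fun y : ℝ => min y 1) (Ioi 0) μ)
    (hφ : ∀ z : ℂ, 0 < z.re → φ z = c₀ + d₀ * z + levyIntegral μ z)
    {m x : ℝ} (hm : 0 < m) (hmx : m ≤ x) :
    m * (d₀ + ∫ y in Ioi (0 : ℝ), rexp (-(m * y)) * y ∂μ) ≤ (φ x).re := by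
  have hderiv := mul_integral_le_re_levyIntegral hμ hm
  have hmono := monotoneOn_re_levyIntegral hμ (mem_Ici.2 hm.le) (mem_Ici.2 (hm.le.trans hmx)) hmx
  rw [hφ x (by simpa using hm.trans_le hmx)]
  simp only [Complex.add_re, Complex.ofReal_re, Complex.mul_re, Complex.ofReal_im]
  nlinarith

end Bernstein

theorem norm_le_div_mul_norm_of_norm_sub_le {E : Type*} [SeminormedAddCommGroup E] {u v : E}
    {a a' c d K : ℝ} (hc : 0 < c) (ha : a ∈ Icc c d) (ha' : a' ∈ Icc c d)
    (hsub : ‖v - u‖ ≤ |a - a'| * K) (hu : c * K ≤ ‖u‖) :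
    ‖v‖ ≤ d / c * ‖u‖ := by
  have hv : ‖v‖ ≤ ‖u‖ + |a - a'| * K := by
    linarith [norm_le_norm_add_norm_sub' v u]
  have haa' : |a - a'| ≤ d - c :=
    abs_sub_le_iff.2 ⟨by linarith [ha.2, ha'.1], by linarith [ha.1, ha'.2]⟩
  rw [div_mul_eq_mul_div, le_div_iff₀ hc]
  rcases le_total 0 K with hK | hK
  · nlinarith [mul_le_mul_of_nonneg_right haa' hK, abs_nonneg (a - a')]
  · nlinarith [mul_nonpos_of_nonneg_of_nonpos (abs_nonneg (a - a')) hK, norm_nonneg u, ha.1, ha.2]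

theorem bernstein_uniform_ratio_general
    (c₀ d₀ : ℝ) (hc₀ : 0 ≤ c₀) (hd₀ : 0 ≤ d₀)
    (μ : Measure ℝ)
    (hμ : ∫⁻ y in Set.Ioi (0:ℝ), ENNReal.ofReal (min y 1) ∂μ ≠ ⊤)
    (φ : ℂ → ℂ)
    (hφ : ∀ z : ℂ, 0 < z.re →
      φ z = (c₀ : ℂ) + (d₀ : ℂ) * z +
        ∫ y in Set.Ioi (0:ℝ), (1 - Complex.exp (-(z * (y : ℂ)))) ∂μ)
    (c d : ℝ) (hc : 0 < c) :
    ∀ a ∈ Set.Icc c d, ∀ a' ∈ Set.Icc c d, ∀ b : ℝ,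
      ‖φ ((a' : ℂ) + (b : ℂ) * Complex.I) -
          φ ((a : ℂ) + (b : ℂ) * Complex.I)‖ ≤
        |a - a'| * (d₀ + ∫ y in Set.Ioi (0:ℝ),
          Real.exp (-(min a a' * y)) * y ∂μ) ∧
      (φ ((a : ℝ) : ℂ)).re ≤ ‖φ ((a : ℂ) + (b : ℂ) * Complex.I)‖ ∧
      ‖φ ((a' : ℂ) + (b : ℂ) * Complex.I)‖ ≤
        (d / c) * ‖φ ((a : ℂ) + (b : ℂ) * Complex.I)‖ := by
  intro a ha a' ha' b
  have hμ' := integrableOn_min_one_of_lintegral_ne_top hμ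
  have hφ' : ∀ z : ℂ, 0 < z.re → φ z = c₀ + d₀ * z + levyIntegral μ z := hφ
  have hm : 0 < min a a' := lt_min (hc.trans_le ha.1) (hc.trans_le ha'.1)
  have hsub : ‖φ (a' + b * Complex.I) - φ (a + b * Complex.I)‖ ≤
      |a - a'| * (d₀ + ∫ y in Ioi (0 : ℝ), rexp (-(min a a' * y)) * y ∂μ) := by
    have := bernstein_norm_sub_le hd₀ hμ' hφ' hm (z := a' + b * Complex.I)
      (w := a + b * Complex.I) (by simp) (by simp)
    rwa [add_sub_add_right_eq_sub, ← Complex.ofReal_sub, Complex.norm_real, Real.norm_eq_abs,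
      abs_sub_comm] at this
  have hre : (φ a).re ≤ ‖φ (a + b * Complex.I)‖ := by
    simpa using bernstein_re_re_le_norm hμ' hφ' (z := a + b * Complex.I)
      (by simpa using hm.trans_le (min_le_left a a'))
  refine ⟨hsub, hre, norm_le_div_mul_norm_of_norm_sub_le hc ha ha' hsub ?_⟩
  have hderiv_nonneg : 0 ≤ d₀ + ∫ y in Ioi (0 : ℝ), rexp (-(min a a' * y)) * y ∂μ :=
    add_nonneg hd₀ (setIntegral_nonneg measurableSet_Ioi fun _ hy =>
      mul_nonneg (Real.exp_pos _).le (le_of_lt hy))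
  calc c * (d₀ + ∫ y in Ioi (0 : ℝ), rexp (-(min a a' * y)) * y ∂μ)
      ≤ min a a' * (d₀ + ∫ y in Ioi (0 : ℝ), rexp (-(min a a' * y)) * y ∂μ) :=
        mul_le_mul_of_nonneg_right (le_min ha.1 ha'.1) hderiv_nonneg
    _ ≤ (φ a).re := bernstein_mul_deriv_le_re hc₀ hd₀ hμ' hφ' hm (min_le_left a a')
    _ ≤ _ := hre

/-- Uniform comparison of a non-zero Bernstein function along vertical lines with
real parts in a compact interval `[c, d] ⊂ (0, ∞)`. -/
theorem bernstein_uniform_ratio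
    (c₀ d₀ : ℝ) (hc₀ : 0 ≤ c₀) (hd₀ : 0 ≤ d₀)
    (μ : Measure ℝ)
    (hμ : ∫⁻ y in Set.Ioi (0:ℝ), ENNReal.ofReal (min y 1) ∂μ ≠ ⊤)
    (φ : ℂ → ℂ)
    (hφ : ∀ z : ℂ, 0 < z.re →
      φ z = (c₀ : ℂ) + (d₀ : ℂ) * z +
        ∫ y in Set.Ioi (0:ℝ), (1 - Complex.exp (-(z * (y : ℂ)))) ∂μ)
    (hne : ¬(c₀ = 0 ∧ d₀ = 0 ∧ μ (Set.Ioi 0) = 0))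
    (c d : ℝ) (hc : 0 < c) (hcd : c ≤ d) :
    ∀ a ∈ Set.Icc c d, ∀ a' ∈ Set.Icc c d, ∀ b : ℝ,
      ‖φ ((a' : ℂ) + (b : ℂ) * Complex.I) -
          φ ((a : ℂ) + (b : ℂ) * Complex.I)‖ ≤
        |a - a'| * (d₀ + ∫ y in Set.Ioi (0:ℝ),
          Real.exp (-(min a a' * y)) * y ∂μ) ∧
      (φ ((a : ℝ) : ℂ)).re ≤ ‖φ ((a : ℂ) + (b : ℂ) * Complex.I)‖ ∧
      ‖φ ((a' : ℂ) + (b : ℂ) * Complex.I)‖ ≤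
        (d / c) * ‖φ ((a : ℂ) + (b : ℂ) * Complex.I)‖ :=
  bernstein_uniform_ratio_general c₀ d₀ hc₀ hd₀ μ hμ φ hφ c d hc
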